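/- Let C = {C_1,…,C_K} be a clustering of {1,…,n} and let A be an n×n stochastic matrix that has all diagonal entries positive, has inter-cluster common influence w.r.t. C, and has cluster-spanning-trees w.r.t. C. Then ℝ^n = S_C + W, where W = {v ∈ ℝ^n : lim_{t→∞} A^t v = 0}; that is, for every x ∈ ℝ^n there exists y ∈ S_C such that A^t (x − y) → 0 as t → ∞. -/

import Mathlib

open Finset Filter Topology Matrix

/-- An `n × n` real matrix is stochastic if all entries are nonnegative and
every row sums to `1`. -/
def IsStochastic {n : ℕ} (A : Matrix (Fin n) (Fin n) ℝ) : Prop :=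
  (∀ i j, 0 ≤ A i j) ∧ ∀ i, ∑ j, A i j = 1

/-- A clustering of `{1,…,n}`: pairwise disjoint subsets whose union is everything. -/
def IsClustering {n K : ℕ} (C : Fin K → Finset (Fin n)) : Prop :=
  (∀ p q, p ≠ q → Disjoint (C p) (C q)) ∧ ∀ i, ∃ p, i ∈ C p

/-- Reachability along directed edges of `G(A)`: edge from `j` to `i` iff `A i j > 0`. -/
def Reaches {n : ℕ} (A : Matrix (Fin n) (Fin n) ℝ) : Fin n → Fin n → Prop :=
  Relation.ReflTransGen fun j i => 0 < A i j

/-- `A` has cluster-spanning-trees w.r.t. `C`: for each cluster there is a vertex from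
which every vertex of the cluster is reachable in `G(A)`. -/
def HasClusterSpanningTrees {n K : ℕ} (C : Fin K → Finset (Fin n))
    (A : Matrix (Fin n) (Fin n) ℝ) : Prop :=
  ∀ p, ∃ v, ∀ i ∈ C p, Reaches A v i

/-- Inter-cluster common influence: `∑_{j ∈ C q} A i j` is the same for all `i ∈ C p`. -/
def InterClusterCommonInfluence {n K : ℕ} (C : Fin K → Finset (Fin n))
    (A : Matrix (Fin n) (Fin n) ℝ) : Prop :=
  ∀ p q, ∀ i ∈ C p, ∀ i' ∈ C p, ∑ j ∈ C q, A i j = ∑ j ∈ C q, A i' j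

/-- Cluster ergodicity coefficient
`μ_C(A) = min_p min_{i,j ∈ C p} ∑_k min (A i k) (A j k)`. -/
noncomputable def muC {n K : ℕ} (C : Fin K → Finset (Fin n))
    (A : Matrix (Fin n) (Fin n) ℝ) : ℝ :=
  sInf {s | ∃ p, ∃ i ∈ C p, ∃ j ∈ C p, s = ∑ k, min (A i k) (A j k)}

/-- Cluster Hajnal diameter `Δ_C(A) = max_p max_{i,j ∈ C p} max_k |A i k - A j k|`. -/
noncomputable def DeltaC {n K : ℕ} (C : Fin K → Finset (Fin n))
    (A : Matrix (Fin n) (Fin n) ℝ) : ℝ :=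
  sSup {d | ∃ p, ∃ i ∈ C p, ∃ j ∈ C p, ∃ k, d = |A i k - A j k|}

/-- The cluster-consensus subspace `S_C`. -/
def SC {n K : ℕ} (C : Fin K → Finset (Fin n)) : Set (Fin n → ℝ) :=
  {x | ∀ p, ∀ i ∈ C p, ∀ j ∈ C p, x i = x j}

/-- Left product `prodFrom A a m = A (a+m-1) * ⋯ * A (a+1) * A a` (with `m` factors). -/
def prodFrom {n : ℕ} (A : ℕ → Matrix (Fin n) (Fin n) ℝ) (a : ℕ) :
    ℕ → Matrix (Fin n) (Fin n) ℝ
  | 0 => 1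
  | m + 1 => A (a + m) * prodFrom A a m

/-!
Inter-cluster common influence makes `A` map the cluster-consensus space `S_C`
into itself. Positive diagonal entries and cluster spanning trees make some power `A ^ m`
scrambling inside clusters: two rows of `A ^ m` from the same cluster share a mass `μ > 0`,
and a Hajnal-type estimate shrinks the within-cluster oscillation of `A ^ t x` by `1 - μ` every
`m` steps. So on `ℂⁿ / S_C` every orbit of `A` tends to `0`. A generalized eigenvector of `A`
with `|λ| < 1` lies in `W`; one with `|λ| ≥ 1` lies in `S_C`, since its image in the quotient
grows like `|λ| ^ t`. The generalized eigenspaces span `ℂⁿ`, so `ℂⁿ = S_C + W`, and taking real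
parts gives the real statement.
-/

namespace Module.End

section Stable

variable {R V : Type*} [Semiring R] [AddCommMonoid V] [Module R V] [TopologicalSpace V]
  [ContinuousAdd V] [ContinuousConstSMul R V]

/-- The subspace `W` of the statement. -/
def stableSubmodule (f : Module.End R V) : Submodule R V where
  carrier := {v | Tendsto (fun t : ℕ => (f ^ t) v) atTop (𝓝 0)}
  add_mem' hu hv := by simpa using hu.add hv
  zero_mem' := by simpa using tendsto_const_nhds
  smul_mem' c _ hv := by simpa using hv.const_smul c

lemma mem_stableSubmodule {f : Module.End R V} {v : V} :
    v ∈ f.stableSubmodule ↔ Tendsto (fun t : ℕ => (f ^ t) v) atTop (𝓝 0) :=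
  Iff.rfl

end Stable

/-- The sum has a fixed range: the terms with `j > t` vanish since `t.choose j = 0`. -/
lemma pow_apply_eq_sum_choose_smul {R M : Type*} [CommRing R] [AddCommGroup M] [Module R M]
    (f : Module.End R M) (μ : R) {k : ℕ} {v : M} (hk : ((f - μ • 1) ^ k) v = 0) (t : ℕ) :
    (f ^ t) v = ∑ j ∈ range k, ((t.choose j : R) * μ ^ (t - j)) • ((f - μ • 1) ^ j) v := by
  set N := f - μ • 1
  have hcomm : Commute N (μ • 1) := (Commute.one_right N).smul_right μ
  have hNk : ∀ j, k ≤ j → (N ^ j) v = 0 := fun j hj => by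
    rw [← Nat.sub_add_cancel hj, pow_add, mul_apply, hk, map_zero]
  calc (f ^ t) v = ((N + μ • 1) ^ t) v := by rw [sub_add_cancel]
    _ = ∑ j ∈ range (t + 1), ((t.choose j : R) * μ ^ (t - j)) • (N ^ j) v := by
      rw [hcomm.add_pow, LinearMap.sum_apply]
      refine sum_congr rfl fun j _ => ?_
      simp only [smul_pow, one_pow, mul_apply, Module.End.natCast_apply, LinearMap.smul_apply,
        one_apply, map_smul, ← Nat.cast_smul_eq_nsmul R, smul_smul, mul_comm]
    _ = ∑ j ∈ range (t + 1 + k), ((t.choose j : R) * μ ^ (t - j)) • (N ^ j) v :=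
      sum_subset (range_subset_range.2 (by omega)) fun j _ hj => by
        rw [Nat.choose_eq_zero_of_lt (by simpa using hj), Nat.cast_zero, zero_mul, zero_smul]
    _ = ∑ j ∈ range k, ((t.choose j : R) * μ ^ (t - j)) • (N ^ j) v :=
      (sum_subset (range_subset_range.2 (by omega)) fun j _ hj => by
        rw [hNk j (by simpa using hj), smul_zero]).symm

lemma tendsto_choose_mul_pow_sub {R : Type*} [NormedRing R] [HasSummableGeomSeries R] (j : ℕ)
    {μ : R} (hμ : ‖μ‖ < 1) :
    Tendsto (fun t : ℕ => (t.choose j : R) * μ ^ (t - j)) atTop (𝓝 0) :=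
  (tendsto_add_atTop_iff_nat j).1 <| by
    simpa using (summable_choose_mul_geometric_of_norm_lt_one j hμ).tendsto_atTop_zero

variable {𝕜 V : Type*} [NormedField 𝕜] [HasSummableGeomSeries 𝕜] [NormedAddCommGroup V]
  [NormedSpace 𝕜 V]

theorem maxGenEigenspace_le_stableSubmodule (f : Module.End 𝕜 V) {μ : 𝕜} (hμ : ‖μ‖ < 1) :
    f.maxGenEigenspace μ ≤ f.stableSubmodule := by
  intro v hv
  obtain ⟨k, hk⟩ := (mem_maxGenEigenspace f μ v).1 hv
  rw [mem_stableSubmodule, funext (f.pow_apply_eq_sum_choose_smul μ hk)]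
  simpa using tendsto_finsetSum (range k) fun j _ =>
    (tendsto_choose_mul_pow_sub j hμ).smul_const (((f - μ • 1) ^ j) v)

section Quotient

variable {𝕜 V W : Type*} [NormedField 𝕜] [AddCommGroup V] [Module 𝕜 V] [NormedAddCommGroup W]
  [NormedSpace 𝕜 W] (f : Module.End 𝕜 V) (π : V →ₗ[𝕜] W)
  (hf : ∀ v ∈ LinearMap.ker π, f v ∈ LinearMap.ker π)
include hf

lemma map_pow_apply_eq_pow_smul {μ : 𝕜} {v : V} (hv : π (f v) = μ • π v) (t : ℕ) :
    π ((f ^ t) v) = μ ^ t • π v := by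
  induction t with
  | zero => simp
  | succ t ih =>
    have hd : (f ^ t) v - μ ^ t • v ∈ LinearMap.ker π := by simp [ih]
    have := hf _ hd
    simp only [LinearMap.mem_ker, map_sub, map_smul, sub_eq_zero] at this
    rw [pow_succ', mul_apply, this, hv, smul_smul, pow_succ]

theorem maxGenEigenspace_le_ker (hπ : ∀ v, Tendsto (fun t : ℕ => π ((f ^ t) v)) atTop (𝓝 0))
    {μ : 𝕜} (hμ : 1 ≤ ‖μ‖) : f.maxGenEigenspace μ ≤ LinearMap.ker π := by
  intro v hv
  obtain ⟨k, hk⟩ := (mem_maxGenEigenspace f μ v).1 hv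
  clear hv
  induction k generalizing v with
  | zero => simp_all
  | succ k ih =>
    have hNv : (f - μ • 1) v ∈ LinearMap.ker π :=
      ih (by rwa [← mul_apply, ← pow_succ])
    have hv : π (f v) = μ • π v := by
      simpa [sub_eq_zero] using hNv
    have hle : ∀ t : ℕ, ‖π v‖ ≤ ‖π ((f ^ t) v)‖ := fun t => by
      rw [map_pow_apply_eq_pow_smul f π hf hv, norm_smul, norm_pow]
      exact le_mul_of_one_le_left (norm_nonneg _) (one_le_pow₀ hμ)
    exact norm_le_zero_iff.1 (ge_of_tendsto' (by simpa using (hπ v).norm) hle)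

end Quotient

theorem ker_sup_stableSubmodule_eq_top {V W : Type*} [NormedAddCommGroup V] [NormedSpace ℂ V]
    [FiniteDimensional ℂ V] [NormedAddCommGroup W] [NormedSpace ℂ W] (f : Module.End ℂ V)
    (π : V →ₗ[ℂ] W) (hf : ∀ v ∈ LinearMap.ker π, f v ∈ LinearMap.ker π)
    (hπ : ∀ v, Tendsto (fun t : ℕ => π ((f ^ t) v)) atTop (𝓝 0)) :
    LinearMap.ker π ⊔ f.stableSubmodule = ⊤ := by
  rw [eq_top_iff, ← f.iSup_maxGenEigenspace_eq_top]
  refine iSup_le fun μ => ?_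
  rcases lt_or_ge ‖μ‖ 1 with hμ | hμ
  · exact (f.maxGenEigenspace_le_stableSubmodule hμ).trans le_sup_right
  · exact (f.maxGenEigenspace_le_ker π hf hπ hμ).trans le_sup_left

end Module.End

variable {n K : ℕ} {C : Fin K → Finset (Fin n)}

lemma IsClustering.eq_of_mem (hC : IsClustering C) {p q : Fin K} {i : Fin n} (hp : i ∈ C p)
    (hq : i ∈ C q) : p = q := by
  by_contra h
  exact disjoint_left.1 (hC.1 p q h) hp hq

lemma IsClustering.sum_eq_sum_sum (hC : IsClustering C) {M : Type*} [AddCommMonoid M]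
    (F : Fin n → M) : ∑ j, F j = ∑ p, ∑ j ∈ C p, F j := by
  rw [← sum_biUnion fun p _ q _ hpq => hC.1 p q hpq]
  refine sum_congr (eq_univ_of_forall fun j => ?_).symm fun _ _ => rfl
  simpa using hC.2 j

def clusterConsensus (R : Type*) [Semiring R] (C : Fin K → Finset (Fin n)) :
    Submodule R (Fin n → R) where
  carrier := {x | ∀ p, ∀ i ∈ C p, ∀ j ∈ C p, x i = x j}
  add_mem' hx hy p i hi j hj := by simp [hx p i hi j hj, hy p i hi j hj]
  zero_mem' _ _ _ _ _ := rfl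
  smul_mem' c x hx p i hi j hj := by simp [hx p i hi j hj]

/-- A linear map with kernel `S_C`; it stands in for the quotient map onto `Rⁿ / S_C`. -/
def clusterDisagreement (R : Type*) [CommRing R] (C : Fin K → Finset (Fin n)) :
    (Fin n → R) →ₗ[R] ((p : Fin K) → C p → C p → R) where
  toFun x _ i j := x i - x j
  map_add' x y := by ext; simp only [Pi.add_apply]; abel
  map_smul' c x := by ext; simp [mul_sub]

lemma ker_clusterDisagreement {R : Type*} [CommRing R] :
    LinearMap.ker (clusterDisagreement R C) = clusterConsensus R C := by
  ext x
  simp [clusterDisagreement, clusterConsensus, funext_iff, sub_eq_zero]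

lemma InterClusterCommonInfluence.map_mulVec_mem {A : Matrix (Fin n) (Fin n) ℝ}
    (hA : InterClusterCommonInfluence C A) (hC : IsClustering C) {R : Type*} [CommRing R]
    [Algebra ℝ R] {x : Fin n → R} (hx : x ∈ clusterConsensus R C) :
    A.map (algebraMap ℝ R) *ᵥ x ∈ clusterConsensus R C := by
  intro p i hi j hj
  have hblock : ∀ q, ∑ l ∈ C q, algebraMap ℝ R (A i l) * x l
      = ∑ l ∈ C q, algebraMap ℝ R (A j l) * x l := by
    intro q
    rcases (C q).eq_empty_or_nonempty with h | ⟨l₀, hl₀⟩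
    · simp [h]
    have hconst : ∀ z, ∑ l ∈ C q, algebraMap ℝ R (A z l) * x l
        = algebraMap ℝ R (∑ l ∈ C q, A z l) * x l₀ := fun z => by
      rw [map_sum, sum_mul]
      exact sum_congr rfl fun l hl => by rw [hx q l hl l₀ hl₀]
    rw [hconst, hconst, hA p q i hi j hj]
  simp only [mulVec, dotProduct, map_apply]
  rw [hC.sum_eq_sum_sum, hC.sum_eq_sum_sum]
  exact sum_congr rfl fun q _ => hblock q

lemma InterClusterCommonInfluence.pow_mulVec_mem {A : Matrix (Fin n) (Fin n) ℝ}
    (hA : InterClusterCommonInfluence C A) (hC : IsClustering C) (t : ℕ) {x : Fin n → ℝ}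
    (hx : x ∈ clusterConsensus ℝ C) : A ^ t *ᵥ x ∈ clusterConsensus ℝ C := by
  induction t with
  | zero => simpa
  | succ t ih =>
    rw [pow_succ', ← mulVec_mulVec]
    exact hA.map_mulVec_mem hC ih

variable (C) in
def ClusterOscLE (x : Fin n → ℝ) (ε : ℝ) : Prop :=
  ∀ p, ∀ i ∈ C p, ∀ j ∈ C p, x i - x j ≤ ε

lemma ClusterOscLE.exists_mem_clusterConsensus (hC : IsClustering C) {x : Fin n → ℝ} {ε : ℝ}
    (hx : ClusterOscLE C x ε) :
    ∃ c ∈ clusterConsensus ℝ C, ∀ l, c l ≤ x l ∧ x l ≤ c l + ε := by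
  choose cl hcl using hC.2
  have : ∀ l, Nonempty (C (cl l)) := fun l => ⟨⟨l, hcl l⟩⟩
  refine ⟨fun l => ⨅ l' : C (cl l), x l', fun p i hi j hj => ?_, fun l => ⟨?_, ?_⟩⟩
  · show ⨅ l' : C (cl i), x l' = ⨅ l' : C (cl j), x l'
    rw [hC.eq_of_mem (hcl i) hi, hC.eq_of_mem (hcl j) hj]
  · exact ciInf_le (Finite.bddBelow_range fun l' : C (cl l) => x l') ⟨l, hcl l⟩
  · show x l ≤ (⨅ l' : C (cl l), x l') + ε
    rw [← sub_le_iff_le_add]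
    exact le_ciInf fun l' => by linarith [hx _ l (hcl l) l' l'.2]

/-- Since `M *ᵥ c` is constant on clusters, only `x - c ∈ [0, ε]` matters, and the mass
`min (M i k) (M j k)` common to both rows cancels. -/
lemma mulVec_sub_mulVec_le {M : Matrix (Fin n) (Fin n) ℝ} (hM : ∀ i, ∑ k, M i k = 1)
    (hMC : ∀ x ∈ clusterConsensus ℝ C, M *ᵥ x ∈ clusterConsensus ℝ C) {c x : Fin n → ℝ}
    (hc : c ∈ clusterConsensus ℝ C) {ε : ℝ} (hcx : ∀ l, c l ≤ x l ∧ x l ≤ c l + ε)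
    {p : Fin K} {i j : Fin n} (hi : i ∈ C p) (hj : j ∈ C p) :
    (M *ᵥ x) i - (M *ᵥ x) j ≤ (1 - ∑ k, min (M i k) (M j k)) * ε := by
  have hMc : (M *ᵥ c) i = (M *ᵥ c) j := hMC c hc p i hi j hj
  calc (M *ᵥ x) i - (M *ᵥ x) j = ∑ k, (M i k - M j k) * (x k - c k) := by
        simp only [mulVec, dotProduct] at hMc ⊢
        rw [← sub_eq_zero] at hMc
        rw [← sub_zero (_ - _), ← hMc, ← sum_sub_distrib, ← sum_sub_distrib, ← sum_sub_distrib]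
        exact sum_congr rfl fun k _ => by ring
    _ ≤ ∑ k, (M i k - min (M i k) (M j k)) * ε := by
        refine sum_le_sum fun k _ => ?_
        obtain ⟨h0, hε⟩ := hcx k
        calc (M i k - M j k) * (x k - c k) ≤ (M i k - min (M i k) (M j k)) * (x k - c k) :=
              mul_le_mul_of_nonneg_right (by linarith [min_le_right (M i k) (M j k)]) (by linarith)
          _ ≤ (M i k - min (M i k) (M j k)) * ε :=
              mul_le_mul_of_nonneg_left (by linarith) (by linarith [min_le_left (M i k) (M j k)])
    _ = (1 - ∑ k, min (M i k) (M j k)) * ε := by rw [← sum_mul, sum_sub_distrib, hM i]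

lemma ClusterOscLE.mulVec (hC : IsClustering C) {M : Matrix (Fin n) (Fin n) ℝ}
    (hM : ∀ i, ∑ k, M i k = 1)
    (hMC : ∀ x ∈ clusterConsensus ℝ C, M *ᵥ x ∈ clusterConsensus ℝ C) {μ ε : ℝ} (hε : 0 ≤ ε)
    (hμ : ∀ p, ∀ i ∈ C p, ∀ j ∈ C p, μ ≤ ∑ k, min (M i k) (M j k)) {x : Fin n → ℝ}
    (hx : ClusterOscLE C x ε) : ClusterOscLE C (M *ᵥ x) ((1 - μ) * ε) := by
  obtain ⟨c, hc, hcx⟩ := hx.exists_mem_clusterConsensus hC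
  intro p i hi j hj
  exact (mulVec_sub_mulVec_le hM hMC hc hcx hi hj).trans
    (mul_le_mul_of_nonneg_right (by linarith [hμ p i hi j hj]) hε)

lemma Matrix.mul_apply_pos {ι R : Type*} [Fintype ι] [Semiring R] [PartialOrder R]
    [IsStrictOrderedRing R] {M N : Matrix ι ι R} (hM : ∀ i j, 0 ≤ M i j)
    (hN : ∀ i j, 0 ≤ N i j) {i j k : ι} (hij : 0 < M i j) (hjk : 0 < N j k) :
    0 < (M * N) i k :=
  (mul_pos hij hjk).trans_le <|
    single_le_sum (f := fun l => M i l * N l k) (fun l _ => mul_nonneg (hM i l) (hN l k))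
      (mem_univ j)

section Stochastic

variable {A : Matrix (Fin n) (Fin n) ℝ} (hA : A ∈ rowStochastic ℝ (Fin n))
  (hdiag : ∀ i, 0 < A i i)
include hA hdiag

lemma pow_apply_self_pos (v : Fin n) (t : ℕ) : 0 < (A ^ t) v v := by
  induction t with
  | zero => simp
  | succ t ih =>
    rw [pow_succ']
    exact mul_apply_pos (fun _ _ => nonneg_of_mem_rowStochastic hA)
      (fun _ _ => nonneg_of_mem_rowStochastic (pow_mem hA t)) (hdiag v) ih

lemma Reaches.eventually_pow_apply_pos {v i : Fin n} (h : Reaches A v i) :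
    ∀ᶠ t in atTop, 0 < (A ^ t) i v := by
  induction h with
  | refl => exact Eventually.of_forall (pow_apply_self_pos hA hdiag v)
  | tail _ hbc ih =>
    filter_upwards [(tendsto_sub_atTop_nat 1).eventually ih, eventually_ge_atTop 1] with t ht ht1
    rw [← Nat.sub_add_cancel ht1, pow_succ']
    exact mul_apply_pos (fun _ _ => nonneg_of_mem_rowStochastic hA)
      (fun _ _ => nonneg_of_mem_rowStochastic (pow_mem hA _)) hbc ht

lemma HasClusterSpanningTrees.exists_pow_le_sum_min (hspan : HasClusterSpanningTrees C A) :
    ∃ m > 0, ∃ μ > 0, μ ≤ 1 ∧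
      ∀ p, ∀ i ∈ C p, ∀ j ∈ C p, μ ≤ ∑ k, min ((A ^ m) i k) ((A ^ m) j k) := by
  choose v hv using hspan
  have hev : ∀ᶠ t in atTop, ∀ p, ∀ i ∈ C p, 0 < (A ^ t) i (v p) := by
    simp only [eventually_all]
    exact fun p i hi => (hv p i hi).eventually_pow_apply_pos hA hdiag
  obtain ⟨m, hpos, hm⟩ := (hev.and (eventually_gt_atTop 0)).exists
  obtain ⟨δ, hδ⟩ := Finite.exists_ge fun pi : (Σ p, C p) =>
    (⟨(A ^ m) pi.2 (v pi.1), hpos _ _ pi.2.2⟩ : Set.Ioi (0 : ℝ))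
  refine ⟨m, hm, min δ 1, lt_min δ.2 one_pos, min_le_right _ _, fun p i hi j hj => ?_⟩
  have hnn : ∀ k, 0 ≤ min ((A ^ m) i k) ((A ^ m) j k) := fun k =>
    le_min (nonneg_of_mem_rowStochastic (pow_mem hA m))
      (nonneg_of_mem_rowStochastic (pow_mem hA m))
  calc min (δ : ℝ) 1 ≤ min ((A ^ m) i (v p)) ((A ^ m) j (v p)) :=
        (min_le_left _ _).trans (le_min (hδ ⟨p, i, hi⟩) (hδ ⟨p, j, hj⟩))
    _ ≤ ∑ k, min ((A ^ m) i k) ((A ^ m) j k) := single_le_sum (fun k _ => hnn k) (mem_univ _)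

lemma tendsto_pow_mulVec_sub (hC : IsClustering C) (hinfl : InterClusterCommonInfluence C A)
    (hspan : HasClusterSpanningTrees C A) (x : Fin n → ℝ) {p : Fin K} {i j : Fin n}
    (hi : i ∈ C p) (hj : j ∈ C p) :
    Tendsto (fun t : ℕ => (A ^ t *ᵥ x) i - (A ^ t *ᵥ x) j) atTop (𝓝 0) := by
  obtain ⟨m, hm, μ, hμ0, hμ1, hμ⟩ := hspan.exists_pow_le_sum_min hA hdiag
  have hrows : ∀ t i, ∑ k, (A ^ t) i k = 1 := fun t =>
    sum_row_of_mem_rowStochastic (pow_mem hA t)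
  have hx : ClusterOscLE C x (2 * ‖x‖) := fun p i _ j _ => by
    have := norm_sub_le (x i) (x j)
    linarith [Real.le_norm_self (x i - x j), norm_le_pi_norm x i, norm_le_pi_norm x j]
  have hosc : ∀ t, ClusterOscLE C (A ^ t *ᵥ x) ((1 - μ) ^ (t / m) * (2 * ‖x‖)) := by
    intro t
    rw [← Nat.div_add_mod t m, pow_add, pow_mul, ← mulVec_mulVec, Nat.div_add_mod]
    induction t / m with
    | zero =>
      simpa using hx.mulVec hC (hrows _) (fun _ => hinfl.pow_mulVec_mem hC _) (by positivity)
        (μ := 0) fun p i _ j _ => sum_nonneg fun k _ =>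
          le_min (nonneg_of_mem_rowStochastic (pow_mem hA _))
            (nonneg_of_mem_rowStochastic (pow_mem hA _))
    | succ u ih =>
      rw [pow_succ', ← mulVec_mulVec, pow_succ', mul_assoc]
      exact ih.mulVec hC (hrows m) (fun _ => hinfl.pow_mulVec_mem hC m)
        (mul_nonneg (pow_nonneg (by linarith) _) (by positivity)) hμ
  refine squeeze_zero_norm
    (fun t => abs_sub_le_iff.2 ⟨hosc t p i hi j hj, hosc t p j hj i hi⟩) ?_
  simpa using ((tendsto_pow_atTop_nhds_zero_of_lt_one (by linarith) (by linarith)).comp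
    (Nat.tendsto_div_const_atTop hm.ne')).mul_const (2 * ‖x‖)

end Stochastic

lemma Matrix.re_map_ofReal_mulVec {m ι : Type*} [Fintype ι] (M : Matrix m ι ℝ) (w : ι → ℂ)
    (i : m) : ((M.map (↑) *ᵥ w) i).re = (M *ᵥ fun k => (w k).re) i := by
  simp [mulVec, dotProduct, Complex.re_sum]

lemma Matrix.im_map_ofReal_mulVec {m ι : Type*} [Fintype ι] (M : Matrix m ι ℝ) (w : ι → ℂ)
    (i : m) : ((M.map (↑) *ᵥ w) i).im = (M *ᵥ fun k => (w k).im) i := by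
  simp [mulVec, dotProduct, Complex.im_sum]

lemma Matrix.toLin'_map_ofReal_pow_apply (M : Matrix (Fin n) (Fin n) ℝ) (t : ℕ)
    (w : Fin n → ℂ) :
    (toLin' (M.map (↑)) ^ t) w = (M ^ t).map (↑) *ᵥ w := by
  rw [← toLin'_pow, toLin'_apply]
  exact congrArg (· *ᵥ w) (Matrix.map_pow M Complex.ofRealHom t).symm

lemma clusterConsensus_sup_stableSubmodule {A : Matrix (Fin n) (Fin n) ℝ} (hC : IsClustering C)
    (hA : A ∈ rowStochastic ℝ (Fin n)) (hdiag : ∀ i, 0 < A i i)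
    (hinfl : InterClusterCommonInfluence C A) (hspan : HasClusterSpanningTrees C A) :
    clusterConsensus ℂ C ⊔ Module.End.stableSubmodule (toLin' (A.map (↑))) = ⊤ := by
  rw [← ker_clusterDisagreement]
  refine Module.End.ker_sup_stableSubmodule_eq_top _ _ (fun v hv => ?_) fun v => ?_
  · rw [ker_clusterDisagreement] at hv ⊢
    exact hinfl.map_mulVec_mem hC hv
  refine tendsto_pi_nhds.2 fun p => tendsto_pi_nhds.2 fun i => tendsto_pi_nhds.2 fun j => ?_
  have hdecay := fun x : Fin n → ℝ => tendsto_pow_mulVec_sub hA hdiag hC hinfl hspan x i.2 j.2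
  refine squeeze_zero_norm (fun t => Complex.norm_le_abs_re_add_abs_im _) ?_
  simp only [clusterDisagreement, LinearMap.coe_mk, AddHom.coe_mk,
    Matrix.toLin'_map_ofReal_pow_apply, Complex.sub_re, Complex.sub_im,
    Matrix.re_map_ofReal_mulVec, Matrix.im_map_ofReal_mulVec]
  simpa using (hdecay _).abs.add (hdecay _).abs

lemma tendsto_pow_mulVec_re {A : Matrix (Fin n) (Fin n) ℝ} {w : Fin n → ℂ}
    (hw : w ∈ Module.End.stableSubmodule (toLin' (A.map (↑)))) :
    Tendsto (fun t : ℕ => A ^ t *ᵥ fun k => (w k).re) atTop (𝓝 0) :=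
  tendsto_pi_nhds.2 fun i => by
    simpa [Function.comp_def, Matrix.toLin'_map_ofReal_pow_apply,
      Matrix.re_map_ofReal_mulVec] using
      (Complex.continuous_re.tendsto 0).comp (tendsto_pi_nhds.1 hw i)

theorem stmt18 {n K : ℕ} (C : Fin K → Finset (Fin n)) (hC : IsClustering C)
    (A : Matrix (Fin n) (Fin n) ℝ) (hA : IsStochastic A)
    (hdiag : ∀ i, 0 < A i i)
    (hinfl : InterClusterCommonInfluence C A)
    (hspan : HasClusterSpanningTrees C A) :
    ∀ x : Fin n → ℝ, ∃ y ∈ SC C,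
      Tendsto (fun t : ℕ => (A ^ t).mulVec (x - y)) atTop (𝓝 0) := by
  intro x
  have hsup := clusterConsensus_sup_stableSubmodule hC (mem_rowStochastic_iff_sum.2 hA) hdiag
    hinfl hspan
  obtain ⟨s, hs, w, hw, hsw⟩ :=
    Submodule.mem_sup.1 (hsup ▸ Submodule.mem_top : (fun i => (x i : ℂ)) ∈ _)
  have hxs : x - (fun i => (s i).re) = fun i => (w i).re := by
    funext i
    have := congrArg Complex.re (congrFun hsw i)
    simp only [Pi.add_apply, Complex.add_re, Complex.ofReal_re] at this
    simp only [Pi.sub_apply]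
    linarith
  refine ⟨fun i => (s i).re, fun p i hi j hj => by simp only [hs p i hi j hj], ?_⟩
  rw [hxs]
  exact tendsto_pow_mulVec_re hw
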